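/- Chaoticity of powers: Let X be a (real or complex) infinite-dimensional separable Banach space and let A be a densely defined linear operator in X such that every power A^n (n ∈ ℕ) is a closed operator, and suppose there exist a set Y ⊆ C^∞(A) dense in X and a mapping B : Y → Y such that (1) ABf = f for every f ∈ Y and (2) for every f ∈ Y there exist α = α(f) ∈ (0,1) and c = c(f,α) > 0 with max(‖A^n f‖, ‖B^n f‖) ≤ c·α^n for all n ∈ ℕ. Then for every n ∈ ℕ the power A^n is chaotic. -/

import Mathlib

open Filter Topology TopologicalSpace

/-- The domain of the `n`-th power of the operator `A` with domain `D`: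
`x ∈ D(Aⁿ)` iff `Aᵏx ∈ D(A)` for all `k < n`. -/
def opDom {X : Type*} (A : X → X) (D : Set X) (n : ℕ) : Set X :=
  {x | ∀ k < n, A^[k] x ∈ D}

/-- `C^∞(A) = ⋂ₙ D(Aⁿ)`. -/
def opCinf {X : Type*} (A : X → X) (D : Set X) : Set X :=
  {x | ∀ k : ℕ, A^[k] x ∈ D}

/-- `A` is linear on the subspace `D`. -/
def IsLinearOn (𝕜 : Type*) {X : Type*} [RCLike 𝕜] [NormedAddCommGroup X]
    [NormedSpace 𝕜 X] (A : X → X) (D : Set X) : Prop :=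
  (∀ x ∈ D, ∀ y ∈ D, A (x + y) = A x + A y) ∧
  (∀ (c : 𝕜), ∀ x ∈ D, A (c • x) = c • A x)

/-- The `n`-th power of `A` (with domain `D`) is a closed operator:
its graph is closed in `X × X`. -/
def ClosedPower {X : Type*} [NormedAddCommGroup X] (A : X → X) (D : Set X)
    (n : ℕ) : Prop :=
  IsClosed {p : X × X | p.1 ∈ opDom A D n ∧ p.2 = A^[n] p.1}

/-- A hypercyclic vector for `A`: a nonzero `f ∈ C^∞(A)` with dense orbit. -/
def HypercyclicVec {X : Type*} [NormedAddCommGroup X] (A : X → X) (D : Set X)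
    (f : X) : Prop :=
  f ∈ opCinf A D ∧ f ≠ 0 ∧ Dense (Set.range fun n : ℕ => A^[n] f)

/-- `A` (with domain `D`) is hypercyclic. -/
def HypercyclicOp {X : Type*} [NormedAddCommGroup X] (A : X → X) (D : Set X) :
    Prop :=
  ∃ f, HypercyclicVec A D f

/-- `f` is a periodic point of `A`: `f ∈ D(A^N)` and `A^N f = f` for some `N ≥ 1`. -/
def PeriodicPt {X : Type*} (A : X → X) (D : Set X) (f : X) : Prop :=
  ∃ N : ℕ, 0 < N ∧ f ∈ opDom A D N ∧ A^[N] f = f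

/-- `A` (with domain `D`) is chaotic: hypercyclic with a dense set of periodic
points. -/
def ChaoticOp {X : Type*} [NormedAddCommGroup X] (A : X → X) (D : Set X) : Prop :=
  HypercyclicOp A D ∧ Dense {f | PeriodicPt A D f}

/-!
Everything rests on one consequence of closedness: if `uₖ ∈ D(Aᵐ)` and both `∑ uₖ` and
`∑ Aᵐ uₖ` converge, then `∑ uₖ ∈ D(Aᵐ)` and `Aᵐ (∑ uₖ) = ∑ Aᵐ uₖ`. Since `Aⁿ, Bⁿ` satisfy the
same hypotheses as `A, B`, it suffices to show that `A` itself is chaotic.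

For `y ∈ Y` the vector `∑_{k ≥ 1} A^{Nk} y + ∑_{k ≥ 0} B^{Nk} y` is fixed by `A^N`, and it tends
to `y` as `N → ∞`. For hypercyclicity let `zₖ ∈ Y` run through a dense sequence, each term
infinitely often, and put `f = ∑ₖ B^{Nₖ} zₖ`. Then `A^{Nᵢ} f - zᵢ = ∑_{k ≠ i} A^{Nᵢ} B^{Nₖ} zₖ`,
and each term is `A^d zₖ` or `B^d zₖ` with `d = |Nᵢ - Nₖ|`; letting the gaps of `Nₖ` grow fast
enough makes this sum `O(2⁻ⁱ)`, so the orbit of `f` comes arbitrarily close to every `zᵢ`.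
-/

section Domains

variable {X : Type*} {A : X → X} {D : Set X}

lemma opCinf_subset_opDom (m : ℕ) : opCinf A D ⊆ opDom A D m :=
  fun _ hx k _ => hx k

lemma opDom_antitone : Antitone (opDom A D) :=
  fun _ _ hab _ hx k hk => hx k (lt_of_lt_of_le hk hab)

lemma mem_opDom_add {a b : ℕ} {x : X} :
    x ∈ opDom A D (a + b) ↔ x ∈ opDom A D a ∧ A^[a] x ∈ opDom A D b := by
  refine ⟨fun hx => ⟨opDom_antitone (Nat.le_add_right a b) hx, fun k hk => ?_⟩,
    fun ⟨hxa, hxb⟩ k hk => ?_⟩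
  · rw [← Function.iterate_add_apply]
    exact hx _ (by omega)
  · rcases lt_or_ge k a with hka | hak
    · exact hxa k hka
    · obtain ⟨j, rfl⟩ := Nat.exists_eq_add_of_le hak
      rw [Nat.add_comm, Function.iterate_add_apply]
      exact hxb j (by omega)

lemma opDom_one : opDom A D 1 = D := by
  ext x
  simp [opDom]

lemma opDom_iterate (n m : ℕ) : opDom (A^[n]) (opDom A D n) m = opDom A D (n * m) := by
  induction m with
  | zero => ext; simp [opDom]
  | succ m ih =>
    ext x
    rw [Nat.mul_succ, mem_opDom_add, mem_opDom_add, ih, opDom_one, ← Function.iterate_mul]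

lemma iterate_mem_opCinf {x : X} (hx : x ∈ opCinf A D) (j : ℕ) : A^[j] x ∈ opCinf A D :=
  fun k => by
    rw [← Function.iterate_add_apply]
    exact hx _

lemma opCinf_subset_opCinf_iterate (n : ℕ) : opCinf A D ⊆ opCinf (A^[n]) (opDom A D n) :=
  fun _ hx k j _ => by
    rw [← Function.iterate_mul, ← Function.iterate_add_apply]
    exact hx _

end Domains

section Additive

variable {X : Type*} [AddCancelMonoid X] {A : X → X} {D : AddSubmonoid X}

lemma iterate_zero_of_add (hadd : ∀ x ∈ D, ∀ y ∈ D, A (x + y) = A x + A y) (k : ℕ) :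
    A^[k] 0 = 0 :=
  Function.iterate_fixed (by simpa using hadd 0 D.zero_mem 0 D.zero_mem) k

lemma iterate_add_of_mem_opDom (hadd : ∀ x ∈ D, ∀ y ∈ D, A (x + y) = A x + A y) (m : ℕ)
    {x y : X} (hx : x ∈ opDom A D m) (hy : y ∈ opDom A D m) :
    A^[m] (x + y) = A^[m] x + A^[m] y := by
  induction m with
  | zero => rfl
  | succ m ih =>
    simp only [Function.iterate_succ_apply']
    rw [ih (opDom_antitone m.le_succ hx) (opDom_antitone m.le_succ hy),
      hadd _ (hx m m.lt_succ_self) _ (hy m m.lt_succ_self)]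

def opDomAddSubmonoid (hadd : ∀ x ∈ D, ∀ y ∈ D, A (x + y) = A x + A y) (m : ℕ) :
    AddSubmonoid X where
  carrier := opDom A D m
  zero_mem' k _ := by
    rw [iterate_zero_of_add hadd]
    exact D.zero_mem
  add_mem' {x y} hx hy k hk := by
    rw [iterate_add_of_mem_opDom hadd k (opDom_antitone hk.le hx) (opDom_antitone hk.le hy)]
    exact D.add_mem (hx k hk) (hy k hk)

def powGraph (hadd : ∀ x ∈ D, ∀ y ∈ D, A (x + y) = A x + A y) (m : ℕ) :
    AddSubmonoid (X × X) where
  carrier := {p | p.1 ∈ opDom A D m ∧ p.2 = A^[m] p.1}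
  zero_mem' := ⟨(opDomAddSubmonoid hadd m).zero_mem, (iterate_zero_of_add hadd m).symm⟩
  add_mem' := fun ⟨hx, hx'⟩ ⟨hy, hy'⟩ =>
    ⟨(opDomAddSubmonoid hadd m).add_mem hx hy,
      by rw [Prod.snd_add, Prod.fst_add, hx', hy', iterate_add_of_mem_opDom hadd m hx hy]⟩

end Additive

section ClosedPowers

variable {X : Type*} [NormedAddCommGroup X] {A : X → X}

lemma closedPower_zero {D : Set X} : ClosedPower A D 0 := by
  simpa [ClosedPower, opDom] using isClosed_eq continuous_snd continuous_fst

lemma closedPower_iterate {D : Set X} (n m : ℕ) :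
    ClosedPower (A^[n]) (opDom A D n) m ↔ ClosedPower A D (n * m) := by
  simp only [ClosedPower, opDom_iterate, ← Function.iterate_mul]

lemma ClosedPower.mem_opDom_and_iterate_eq_of_hasSum {D : AddSubmonoid X}
    (hadd : ∀ x ∈ D, ∀ y ∈ D, A (x + y) = A x + A y) {m : ℕ} (hcl : ClosedPower A D m)
    {u : ℕ → X} {x y : X} (hu : ∀ k, u k ∈ opDom A D m) (hx : HasSum u x)
    (hy : HasSum (fun k => A^[m] (u k)) y) : x ∈ opDom A D m ∧ A^[m] x = y := by
  have hxy : (x, y) ∈ powGraph hadd m :=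
    hcl.mem_of_tendsto (hx.prodMk hy).tendsto_sum_nat
      (Eventually.of_forall fun _ => (powGraph hadd m).sum_mem fun k _ => ⟨hu k, rfl⟩)
  exact ⟨hxy.1, hxy.2.symm⟩

end ClosedPowers

section RightInverse

variable {X : Type*} {A B : X → X} {Y : Set X}

lemma iterate_apply_iterate_add (hBY : Set.MapsTo B Y Y) (hAB : ∀ f ∈ Y, A (B f) = f)
    {f : X} (hf : f ∈ Y) (m j : ℕ) : A^[m] (B^[m + j] f) = B^[j] f := by
  induction m with
  | zero => simp
  | succ m ih =>
    rw [Function.iterate_succ_apply, Nat.add_right_comm, Function.iterate_succ_apply',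
      hAB _ (hBY.iterate _ hf), ih]

lemma iterate_apply_iterate (hBY : Set.MapsTo B Y Y) (hAB : ∀ f ∈ Y, A (B f) = f)
    {f : X} (hf : f ∈ Y) (m : ℕ) : A^[m] (B^[m] f) = f :=
  iterate_apply_iterate_add hBY hAB hf m 0

lemma iterate_mem_opCinf_of_mapsTo {D : Set X} (hY : Y ⊆ opCinf A D)
    (hBY : Set.MapsTo B Y Y) (hAB : ∀ f ∈ Y, A (B f) = f) {f : X} (hf : f ∈ Y) (j : ℕ) :
    B^[j] f ∈ opCinf A D := by
  intro k
  rcases le_total k j with h | h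
  · obtain ⟨d, rfl⟩ := Nat.exists_eq_add_of_le h
    rw [iterate_apply_iterate_add hBY hAB hf]
    exact hY (hBY.iterate d hf) 0
  · obtain ⟨d, rfl⟩ := Nat.exists_eq_add_of_le h
    rw [Nat.add_comm, Function.iterate_add_apply, iterate_apply_iterate hBY hAB hf]
    exact hY hf d

lemma norm_iterate_apply_iterate_le [NormedAddCommGroup X] (hBY : Set.MapsTo B Y Y)
    (hAB : ∀ f ∈ Y, A (B f) = f) {f : X} (hf : f ∈ Y) (m j : ℕ) :
    ‖A^[m] (B^[j] f)‖ ≤ ‖A^[Nat.dist m j] f‖ + ‖B^[Nat.dist m j] f‖ := by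
  rcases le_total m j with h | h
  · obtain ⟨d, rfl⟩ := Nat.exists_eq_add_of_le h
    rw [iterate_apply_iterate_add hBY hAB hf, show Nat.dist m (m + d) = d by
      simp [Nat.dist]]
    exact le_add_of_nonneg_left (norm_nonneg _)
  · obtain ⟨d, rfl⟩ := Nat.exists_eq_add_of_le h
    rw [Nat.add_comm, Function.iterate_add_apply, iterate_apply_iterate hBY hAB hf,
      show Nat.dist (d + j) j = d by simp [Nat.dist]]
    exact le_add_of_nonneg_right (norm_nonneg _)

end RightInverse

section Periodic

variable {X : Type*} [NormedAddCommGroup X] {A B : X → X}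

noncomputable def periodicSum (A B : X → X) (N : ℕ) (y : X) : X :=
  ∑' k, A^[N * (k + 1)] y + ∑' k, B^[N * k] y

lemma summable_iterate_comp [CompleteSpace X] {T : X → X} {y : X} (hT : Summable fun k => ‖T^[k] y‖)
    {i : ℕ → ℕ} (hi : i.Injective) : Summable fun k => T^[i k] y :=
  (hT.comp_injective hi).of_norm

lemma norm_tsum_iterate_mul_succ_le {T : X → X} {y : X} (hT : Summable fun k => ‖T^[k] y‖)
    {N : ℕ} (hN : 0 < N) : ‖∑' k, T^[N * (k + 1)] y‖ ≤ ∑' j, ‖T^[j + N] y‖ := by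
  have htail : Summable fun j => ‖T^[j + N] y‖ := (summable_nat_add_iff N).2 hT
  have hinj : (N * ·).Injective := mul_right_injective₀ hN.ne'
  simp only [Nat.mul_succ]
  exact (norm_tsum_le_tsum_norm (htail.comp_injective hinj)).trans
    (tsum_comp_le_tsum_of_inj htail (fun _ => norm_nonneg _) hinj)

lemma periodicSum_mem_opDom_and_iterate_eq [CompleteSpace X] {D : AddSubmonoid X} {Y : Set X}
    (hadd : ∀ x ∈ D, ∀ y ∈ D, A (x + y) = A x + A y) {N : ℕ} (hN : 0 < N)
    (hcl : ClosedPower A D N) (hY : Y ⊆ opCinf A D) (hBY : Set.MapsTo B Y Y)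
    (hAB : ∀ f ∈ Y, A (B f) = f) {y : X} (hy : y ∈ Y) (hA : Summable fun k => ‖A^[k] y‖)
    (hB : Summable fun k => ‖B^[k] y‖) :
    periodicSum A B N y ∈ opDom A D N ∧ A^[N] (periodicSum A B N y) = periodicSum A B N y := by
  set a : ℕ → X := fun k => A^[N * (k + 1)] y
  set b : ℕ → X := fun k => B^[N * k] y
  have ha : Summable a :=
    summable_iterate_comp hA fun k l h => by simpa using mul_right_injective₀ hN.ne' h
  have hb : Summable b := summable_iterate_comp hB (mul_right_injective₀ hN.ne')
  have hAa : ∀ k, A^[N] (a k) = a (k + 1) := fun k => by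
    simp only [a, ← Function.iterate_add_apply]
    ring_nf
  have hAb : ∀ k, A^[N] (b (k + 1)) = b k := fun k => by
    simp only [b]
    rw [Nat.mul_succ, Nat.add_comm, iterate_apply_iterate_add hBY hAB hy]
  have hmem : ∀ j, A^[j] y ∈ opDom A D N ∧ B^[j] y ∈ opDom A D N := fun j =>
    ⟨opCinf_subset_opDom N (iterate_mem_opCinf (hY hy) j),
      opCinf_subset_opDom N (iterate_mem_opCinf_of_mapsTo hY hBY hAB hy j)⟩
  have hb0 : b 0 = y := by simp [b]
  have hAsa : HasSum (fun k => A^[N] (a k)) (∑' k, a k - a 0) := by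
    simp only [hAa]
    simpa using (hasSum_nat_add_iff' 1).2 ha.hasSum
  have hAsb : HasSum (fun k => A^[N] (b k)) (∑' k, b k + A^[N] y) := by
    refine (hasSum_nat_add_iff' 1).1 ?_
    simp only [hAb, Finset.sum_range_one, hb0, add_sub_cancel_right]
    exact hb.hasSum
  obtain ⟨haD, hAsa⟩ :=
    hcl.mem_opDom_and_iterate_eq_of_hasSum hadd (fun k => (hmem _).1) ha.hasSum hAsa
  obtain ⟨hbD, hAsb⟩ :=
    hcl.mem_opDom_and_iterate_eq_of_hasSum hadd (fun k => (hmem _).2) hb.hasSum hAsb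
  refine ⟨(opDomAddSubmonoid hadd N).add_mem haD hbD, ?_⟩
  rw [periodicSum, iterate_add_of_mem_opDom hadd N haD hbD, hAsa, hAsb]
  simp [a, b]

lemma norm_periodicSum_sub_le [CompleteSpace X] {y : X} (hA : Summable fun k => ‖A^[k] y‖)
    (hB : Summable fun k => ‖B^[k] y‖) {N : ℕ} (hN : 0 < N) :
    ‖periodicSum A B N y - y‖ ≤ ∑' j, ‖A^[j + N] y‖ + ∑' j, ‖B^[j + N] y‖ := by
  have hb : Summable fun k => B^[N * k] y :=
    summable_iterate_comp hB (mul_right_injective₀ hN.ne')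
  have hsplit : periodicSum A B N y - y = ∑' k, A^[N * (k + 1)] y + ∑' k, B^[N * (k + 1)] y := by
    rw [periodicSum, hb.tsum_eq_zero_add]
    simp only [Nat.mul_zero, Function.iterate_zero, id]
    abel
  rw [hsplit]
  exact (norm_add_le _ _).trans
    (add_le_add (norm_tsum_iterate_mul_succ_le hA hN) (norm_tsum_iterate_mul_succ_le hB hN))

lemma dense_setOf_periodicPt [CompleteSpace X] {D : AddSubmonoid X} {Y : Set X}
    (hadd : ∀ x ∈ D, ∀ y ∈ D, A (x + y) = A x + A y)
    (hcl : ∀ m, 0 < m → ClosedPower A D m) (hY : Y ⊆ opCinf A D) (hYd : Dense Y)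
    (hBY : Set.MapsTo B Y Y) (hAB : ∀ f ∈ Y, A (B f) = f)
    (hA : ∀ f ∈ Y, Summable fun k => ‖A^[k] f‖) (hB : ∀ f ∈ Y, Summable fun k => ‖B^[k] f‖) :
    Dense {f | PeriodicPt A D f} := by
  refine dense_closure.1 (hYd.mono fun y hy => ?_)
  have hlim : Tendsto (fun N => periodicSum A B N y) atTop (𝓝 y) := by
    have htails := (tendsto_sum_nat_add fun j => ‖A^[j] y‖).add
      (tendsto_sum_nat_add fun j => ‖B^[j] y‖)
    rw [add_zero] at htails
    rw [tendsto_iff_norm_sub_tendsto_zero]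
    refine squeeze_zero' (Eventually.of_forall fun _ => norm_nonneg _) ?_ htails
    filter_upwards [eventually_gt_atTop 0] with N hN
    exact norm_periodicSum_sub_le (hA y hy) (hB y hy) hN
  refine mem_closure_of_tendsto hlim ?_
  filter_upwards [eventually_gt_atTop 0] with N hN
  exact ⟨N, hN, periodicSum_mem_opDom_and_iterate_eq hadd hN (hcl N hN) hY hBY hAB hy
    (hA y hy) (hB y hy)⟩

end Periodic

lemma exists_seq_mem_frequently_dist_lt {X : Type*} [MetricSpace X] [SeparableSpace X]
    [Nonempty X] {Y : Set X} (hY : Dense Y) :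
    ∃ z : ℕ → X, (∀ k, z k ∈ Y) ∧ ∀ x, ∀ ε > 0, ∃ᶠ k in atTop, dist (z k) x < ε := by
  have := UniformSpace.secondCountable_of_separable X
  obtain ⟨t, htY, htc, htd⟩ := hY.exists_countable_dense_subset
  obtain ⟨w, rfl⟩ := htc.exists_eq_range htd.nonempty
  refine ⟨fun k => w k.unpair.1, fun k => htY ⟨_, rfl⟩, fun x ε hε => ?_⟩
  obtain ⟨_, ⟨j, rfl⟩, hj⟩ := Metric.mem_closure_iff.1 (htd x) ε hε
  exact frequently_atTop.2 fun K =>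
    ⟨Nat.pair j K, Nat.right_le_pair j K, by simpa [dist_comm] using hj⟩

lemma dense_range_of_tendsto_dist {X : Type*} [MetricSpace X] {z w : ℕ → X}
    (hz : ∀ x, ∀ ε > 0, ∃ᶠ k in atTop, dist (z k) x < ε)
    (hwz : Tendsto (fun i => dist (w i) (z i)) atTop (𝓝 0)) : Dense (Set.range w) := by
  refine Metric.dense_iff.2 fun x r hr => ?_
  obtain ⟨i, hzi, hwi⟩ :=
    ((hz x (r / 2) (half_pos hr)).and_eventually (hwz.eventually_lt_const (half_pos hr))).exists
  refine ⟨w i, ?_, i, rfl⟩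
  rw [Metric.mem_ball]
  linarith [dist_triangle (w i) (z i) x]

lemma exists_strictMono_forall_ne_le (ψ : ℕ → ℕ → ℝ) (hψ : ∀ k, Tendsto (ψ k) atTop (𝓝 0))
    {δ : ℕ → ℝ} (hδ : ∀ k, 0 < δ k) :
    ∃ N : ℕ → ℕ, N 0 = 0 ∧ StrictMono N ∧
      ∀ i k, i ≠ k → ψ k (Nat.dist (N i) (N k)) ≤ δ i * δ k := by
  have hgap : ∀ m, ∃ g, ∀ e ≥ g, ∀ k ≤ m, ∀ l ≤ m, ψ k e ≤ δ l * δ m := by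
    intro m
    have hev : ∀ᶠ e in atTop, ∀ k ∈ Set.Iic m, ∀ l ∈ Set.Iic m, ψ k e ≤ δ l * δ m := by
      refine (Set.finite_Iic m).eventually_all.2 fun k _ => (Set.finite_Iic m).eventually_all.2
        fun l _ => ?_
      exact ((hψ k).eventually_lt_const (mul_pos (hδ l) (hδ m))).mono fun _ => le_of_lt
    exact eventually_atTop.1 hev
  choose g hg using hgap
  set N : ℕ → ℕ := fun m => ∑ j ∈ Finset.range m, (g (j + 1) + 1)
  have hsucc : ∀ m, N (m + 1) = N m + g (m + 1) + 1 := fun m => Finset.sum_range_succ _ m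
  have hmono : StrictMono N := strictMono_nat_of_lt_succ fun m => by rw [hsucc]; omega
  have hgapN : ∀ l m, l < m → N l + g m ≤ N m := by
    intro l m hlm
    obtain ⟨m, rfl⟩ := Nat.exists_eq_add_of_lt hlm
    have := hmono.monotone (Nat.le_add_right l m)
    rw [hsucc]
    omega
  refine ⟨N, Finset.sum_range_zero _, hmono, fun i k hik => ?_⟩
  rcases hik.lt_or_gt with h | h
  · have := hgapN i k h
    exact hg k _ (by unfold Nat.dist; omega) k le_rfl i h.le
  · have := hgapN k i h
    exact (hg i _ (by unfold Nat.dist; omega) k h.le k h.le).trans_eq (mul_comm _ _)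

lemma norm_tsum_sub_le_of_forall_ne {ι X : Type*} [NormedAddCommGroup X]
    {v : ι → X} (hv : Summable v) {b : ι → ℝ} {s : ℝ} (hb : HasSum b s) (hb0 : ∀ k, 0 ≤ b k)
    {i : ι} (hvb : ∀ k, k ≠ i → ‖v k‖ ≤ b k) : ‖∑' k, v k - v i‖ ≤ s := by
  classical
  rw [hv.tsum_eq_add_tsum_ite i, add_sub_cancel_left]
  refine tsum_of_norm_bounded hb fun k => ?_
  split_ifs with h
  · simpa using hb0 k
  · exact hvb k h

lemma ne_zero_of_dense_range_iterate {X : Type*} [NormedAddCommGroup X] [Nontrivial X]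
    {A : X → X} (h0 : A 0 = 0) {f : X} (hf : Dense (Set.range fun n => A^[n] f)) : f ≠ 0 := by
  rintro rfl
  obtain ⟨x, hx⟩ := exists_ne (0 : X)
  simp only [Function.iterate_fixed h0, Set.range_const] at hf
  exact hx (by simpa using hf x)

lemma exists_hypercyclicVec {X : Type*} [NormedAddCommGroup X] [CompleteSpace X]
    [SeparableSpace X] [Nontrivial X] {A B : X → X} {D : AddSubmonoid X} {Y : Set X}
    (hadd : ∀ x ∈ D, ∀ y ∈ D, A (x + y) = A x + A y) (hcl : ∀ m, ClosedPower A D m)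
    (hY : Y ⊆ opCinf A D) (hYd : Dense Y) (hBY : Set.MapsTo B Y Y)
    (hAB : ∀ f ∈ Y, A (B f) = f)
    (hA : ∀ f ∈ Y, Summable fun k => ‖A^[k] f‖) (hB : ∀ f ∈ Y, Summable fun k => ‖B^[k] f‖) :
    HypercyclicOp A D := by
  obtain ⟨z, hzY, hz⟩ := exists_seq_mem_frequently_dist_lt hYd
  obtain ⟨N, hN0, hNmono, hNdist⟩ := exists_strictMono_forall_ne_le
    (fun k e => ‖A^[e] (z k)‖ + ‖B^[e] (z k)‖)
    (fun k => by simpa using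
      (hA _ (hzY k)).tendsto_atTop_zero.norm.add (hB _ (hzY k)).tendsto_atTop_zero.norm)
    (δ := fun k => (1 / 2 : ℝ) ^ k) (fun k => by positivity)
  set u : ℕ → X := fun k => B^[N k] (z k)
  have hbound : ∀ i k, k ≠ i → ‖A^[N i] (u k)‖ ≤ (1 / 2) ^ i * (1 / 2) ^ k := fun i k hki =>
    (norm_iterate_apply_iterate_le hBY hAB (hzY k) _ _).trans (hNdist i k hki.symm)
  have hsum : ∀ i, Summable fun k => A^[N i] (u k) := fun i =>
    .of_norm_bounded_eventually_nat (summable_geometric_two.mul_left _)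
      ((eventually_ne_atTop i).mono (hbound i))
  have hu : Summable u := by simpa [hN0] using hsum 0
  set f := ∑' k, u k
  have hfN : ∀ i, f ∈ opDom A D (N i) ∧ A^[N i] f = ∑' k, A^[N i] (u k) := fun i =>
    (hcl (N i)).mem_opDom_and_iterate_eq_of_hasSum hadd
      (fun k => opCinf_subset_opDom _ (iterate_mem_opCinf_of_mapsTo hY hBY hAB (hzY k) _))
      hu.hasSum (hsum i).hasSum
  have hfC : f ∈ opCinf A D := fun k =>
    (hfN (k + 1)).1 k (lt_of_lt_of_le k.lt_succ_self (hNmono.id_le (k + 1)))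
  have hdist : ∀ i, dist (A^[N i] f) (z i) ≤ (1 / 2) ^ i * 2 := fun i => by
    rw [dist_eq_norm, (hfN i).2, ← iterate_apply_iterate hBY hAB (hzY i) (N i)]
    exact norm_tsum_sub_le_of_forall_ne (hsum i) (hasSum_geometric_two.mul_left _)
      (fun k => by positivity) (hbound i)
  have hdense : Dense (Set.range fun n => A^[n] f) := by
    refine (dense_range_of_tendsto_dist hz (squeeze_zero (fun _ => dist_nonneg) hdist ?_)).mono
      (Set.range_comp_subset_range N _)
    simpa using (tendsto_pow_atTop_nhds_zero_of_lt_one (by norm_num : (0 : ℝ) ≤ 1 / 2)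
      (by norm_num)).mul_const 2
  exact ⟨f, hfC, ne_zero_of_dense_range_iterate (iterate_zero_of_add hadd 1) hdense, hdense⟩

theorem chaoticOp_of_rightInverse {X : Type*} [NormedAddCommGroup X] [CompleteSpace X]
    [SeparableSpace X] [Nontrivial X] {A B : X → X} {D : AddSubmonoid X} {Y : Set X}
    (hadd : ∀ x ∈ D, ∀ y ∈ D, A (x + y) = A x + A y) (hcl : ∀ m, 0 < m → ClosedPower A D m)
    (hY : Y ⊆ opCinf A D) (hYd : Dense Y) (hBY : Set.MapsTo B Y Y)
    (hAB : ∀ f ∈ Y, A (B f) = f)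
    (hA : ∀ f ∈ Y, Summable fun k => ‖A^[k] f‖) (hB : ∀ f ∈ Y, Summable fun k => ‖B^[k] f‖) :
    ChaoticOp A D := by
  have hcl₀ : ∀ m, ClosedPower A D m := fun m =>
    m.eq_zero_or_pos.elim (fun h => h ▸ closedPower_zero) (hcl m)
  exact ⟨exists_hypercyclicVec hadd hcl₀ hY hYd hBY hAB hA hB,
    dense_setOf_periodicPt hadd hcl hY hYd hBY hAB hA hB⟩

lemma summable_norm_iterate_of_le_geometric {X : Type*} [NormedAddCommGroup X] {T : X → X}
    {f : X} {α c : ℝ} (hα₀ : 0 ≤ α) (hα₁ : α < 1) (h : ∀ n, 0 < n → ‖T^[n] f‖ ≤ c * α ^ n) :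
    Summable fun n => ‖T^[n] f‖ :=
  .of_norm_bounded_eventually_nat ((summable_geometric_of_lt_one hα₀ hα₁).mul_left c)
    (by filter_upwards [eventually_gt_atTop 0] with n hn using by simpa using h n hn)

lemma summable_norm_iterate_iterate {X : Type*} [NormedAddCommGroup X] {T : X → X} {f : X}
    (h : Summable fun k => ‖T^[k] f‖) {n : ℕ} (hn : 0 < n) :
    Summable fun k => ‖(T^[n])^[k] f‖ := by
  simp only [← Function.iterate_mul]
  exact h.comp_injective (mul_right_injective₀ hn.ne')

theorem chaoticity_of_powers_general
    {𝕜 X : Type*} [RCLike 𝕜] [NormedAddCommGroup X] [NormedSpace 𝕜 X]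
    [CompleteSpace X] [SeparableSpace X]
    (hinfdim : ¬ FiniteDimensional 𝕜 X)
    (D : Submodule 𝕜 X) (A : X → X)
    (hlin : IsLinearOn 𝕜 A (D : Set X))
    (hcl : ∀ n : ℕ, 0 < n → ClosedPower A (D : Set X) n)
    (Y : Set X) (hYsub : Y ⊆ opCinf A (D : Set X)) (hYdense : Dense Y)
    (B : X → X) (hBmaps : Set.MapsTo B Y Y)
    (h1 : ∀ f ∈ Y, A (B f) = f)
    (h2 : ∀ f ∈ Y, ∃ α ∈ Set.Ioo (0 : ℝ) 1, ∃ c > 0,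
      ∀ n : ℕ, 0 < n → max ‖A^[n] f‖ ‖B^[n] f‖ ≤ c * α ^ n)
    :
    ∀ n : ℕ, 0 < n → ChaoticOp (A^[n]) (opDom A (D : Set X) n) := by
  intro n hn
  have : Nontrivial X := not_subsingleton_iff_nontrivial.1 fun _ => hinfdim inferInstance
  have hadd : ∀ x ∈ D.toAddSubmonoid, ∀ y ∈ D.toAddSubmonoid, A (x + y) = A x + A y := hlin.1
  have hsummable : ∀ f ∈ Y, (Summable fun k => ‖A^[k] f‖) ∧ Summable fun k => ‖B^[k] f‖ := by
    intro f hf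
    obtain ⟨α, hα, c, -, hbound⟩ := h2 f hf
    exact ⟨summable_norm_iterate_of_le_geometric hα.1.le hα.2 fun k hk =>
        (le_max_left _ _).trans (hbound k hk),
      summable_norm_iterate_of_le_geometric hα.1.le hα.2 fun k hk =>
        (le_max_right _ _).trans (hbound k hk)⟩
  exact chaoticOp_of_rightInverse (D := opDomAddSubmonoid hadd n) (B := B^[n])
    (fun x hx y hy => iterate_add_of_mem_opDom hadd n hx hy)
    (fun m hm => (closedPower_iterate n m).2 (hcl _ (Nat.mul_pos hn hm)))
    (hYsub.trans (opCinf_subset_opCinf_iterate n)) hYdense (hBmaps.iterate n)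
    (fun f hf => iterate_apply_iterate hBmaps h1 hf n)
    (fun f hf => summable_norm_iterate_iterate (hsummable f hf).1 hn)
    (fun f hf => summable_norm_iterate_iterate (hsummable f hf).2 hn)

/-- **Chaoticity of powers.** -/
theorem chaoticity_of_powers
    {𝕜 X : Type*} [RCLike 𝕜] [NormedAddCommGroup X] [NormedSpace 𝕜 X]
    [CompleteSpace X] [SeparableSpace X]
    (hinfdim : ¬ FiniteDimensional 𝕜 X)
    (D : Submodule 𝕜 X) (A : X → X)
    (hlin : IsLinearOn 𝕜 A (D : Set X))
    (hdd : Dense (D : Set X))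
    (hcl : ∀ n : ℕ, 0 < n → ClosedPower A (D : Set X) n)
    (Y : Set X) (hYsub : Y ⊆ opCinf A (D : Set X)) (hYdense : Dense Y)
    (B : X → X) (hBmaps : Set.MapsTo B Y Y)
    (h1 : ∀ f ∈ Y, A (B f) = f)
    (h2 : ∀ f ∈ Y, ∃ α ∈ Set.Ioo (0 : ℝ) 1, ∃ c > 0,
      ∀ n : ℕ, 0 < n → max ‖A^[n] f‖ ‖B^[n] f‖ ≤ c * α ^ n)
    :
    ∀ n : ℕ, 0 < n → ChaoticOp (A^[n]) (opDom A (D : Set X) n) :=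
  chaoticity_of_powers_general hinfdim D A hlin hcl Y hYsub hYdense B hBmaps h1 h2
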